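/- Every ask that is matched by the optimal allocation is also matched by the Best-first allocation; precisely, the multiset of ask values matched by the optimal allocation (which matches the i-th highest bid to the i-th lowest ask until a pair is not matchable) is contained, as a multiset, in the multiset of ask values matched by the Best-first allocation. -/

import Mathlib

/-- Extract the minimum-value unmatched ask from a list, with a fixed
tie-breaking rule (earlier list positions are preferred). Returns the
minimum together with the remaining list. -/
noncomputable def extractMin : List ℝ → Option (ℝ × List ℝ)
  | [] => none
  | a :: as =>
    match extractMin as with
    | none => some (a, [])
    | some (m, rest) => if a ≤ m then some (a, as) else some (m, a :: rest)

/-- State of the Best-first (greedy) allocation: the currently unmatched asks,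
the matched (ask, bid) pairs in match order, and the unmatched bids. -/
structure BfState where
  unmatchedAsks : List ℝ
  matched : List (ℝ × ℝ)
  unmatchedBids : List ℝ

/-- One step of the Best-first allocation: when bid `b` arrives, match it to the
minimum unmatched ask `a` if `a ≤ b`; otherwise leave `b` unmatched. -/
noncomputable def bfStep (s : BfState) (b : ℝ) : BfState :=
  match extractMin s.unmatchedAsks with
  | some (a, rest) =>
      if a ≤ b then ⟨rest, s.matched ++ [(a, b)], s.unmatchedBids⟩
      else ⟨s.unmatchedAsks, s.matched, s.unmatchedBids ++ [b]⟩
  | none => ⟨s.unmatchedAsks, s.matched, s.unmatchedBids ++ [b]⟩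

/-- Run the Best-first allocation on the bids in arrival order. -/
noncomputable def bfRun (asks bids : List ℝ) : BfState :=
  bids.foldl bfStep ⟨asks, [], []⟩

/-- Insertion into an ascending-sorted list. -/
noncomputable def insertAsc (x : ℝ) : List ℝ → List ℝ
  | [] => [x]
  | y :: ys => if x ≤ y then x :: y :: ys else y :: insertAsc x ys

/-- Sort a list of reals in ascending order. -/
noncomputable def sortAsc (l : List ℝ) : List ℝ := l.foldr insertAsc []

/-- Sort a list of reals in descending order. -/
noncomputable def sortDesc (l : List ℝ) : List ℝ := (sortAsc l).reverse

/-- Match the i-th element of the first list with the i-th element of the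
second, stopping as soon as a pair is not matchable (`a ≤ b` fails). -/
noncomputable def matchPrefix : List ℝ → List ℝ → List (ℝ × ℝ)
  | a :: as, b :: bs => if a ≤ b then (a, b) :: matchPrefix as bs else []
  | _, _ => []

/-- The optimal allocation: match the highest bid with the lowest ask, the
second highest bid with the second lowest ask, and so on, stopping as soon as
a pair is not matchable. -/
noncomputable def optPairs (asks bids : List ℝ) : List (ℝ × ℝ) :=
  matchPrefix (sortAsc asks) (sortDesc bids)

/-- A feasible allocation: a partial matching (multiset of (ask, bid) pairs)
using each ask and each bid at most once, with `a ≤ b` for every matched pair. -/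
def IsFeasible (asks bids : List ℝ) (M : Multiset (ℝ × ℝ)) : Prop :=
  M.map Prod.fst ≤ (asks : Multiset ℝ) ∧
  M.map Prod.snd ≤ (bids : Multiset ℝ) ∧
  ∀ p ∈ M, p.1 ≤ p.2

/-- Social welfare of an allocation: sum of matched bid values plus the sum of
the values of the unmatched asks. -/
noncomputable def welfare (asks : List ℝ) (M : Multiset (ℝ × ℝ)) : ℝ :=
  (M.map Prod.snd).sum + ((asks : Multiset ℝ) - M.map Prod.fst).sum

/-- Social welfare of the Best-first allocation. -/
noncomputable def bfWelfare (asks bids : List ℝ) : ℝ :=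
  ((bfRun asks bids).matched.map Prod.snd).sum + (bfRun asks bids).unmatchedAsks.sum

/-- Maximum social welfare over all feasible allocations. -/
noncomputable def OptW (asks bids : List ℝ) : ℝ :=
  sSup {w : ℝ | ∃ M : Multiset (ℝ × ℝ), IsFeasible asks bids M ∧ w = welfare asks M}

/-!
Let `k` be the number of pairs the optimal allocation forms. Its asks are the `k` lowest asks and
its bids the `k` highest bids, and because the `i`-th lowest ask is matched with the `i`-th highest
bid, some threshold `t` lies between all of these asks and all of these bids: there are at least
`k` asks `≤ t` and at least `k` bids `≥ t`. Best-first matches every bid `≥ t` as long as an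
unmatched ask `≤ t` remains, so it matches at least `k` bids. Since it always takes the cheapest
unmatched ask, the asks it matches are the lowest ones, hence contain the `k` lowest asks.
-/

theorem List.foldl_invariant {α β : Type*} (f : β → α → β) (P : β → Prop)
    (hf : ∀ s a, P s → P (f s a)) : ∀ (l : List α) (s : β), P s → P (l.foldl f s)
  | [], _, hs => hs
  | a :: l, s, hs => List.foldl_invariant f P hf l (f s a) (hf s a hs)

theorem List.Pairwise.coe_take_card_eq_of_add_eq {α : Type*} [LinearOrder α] {L : List α}
    (hL : L.Pairwise (· ≤ ·)) {S T : Multiset α} (hST : S + T = L)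
    (hle : ∀ x ∈ S, ∀ y ∈ T, x ≤ y) : (L.take (Multiset.card S) : Multiset α) = S := by
  have hL' : L = S.sort (· ≤ ·) ++ T.sort (· ≤ ·) := by
    refine List.Perm.eq_of_pairwise' hL ?_ ?_
    · refine List.pairwise_append.2 ⟨S.pairwise_sort _, T.pairwise_sort _, ?_⟩
      intro x hx y hy
      exact hle x ((S.mem_sort _).1 hx) y ((T.mem_sort _).1 hy)
    · rw [← Multiset.coe_eq_coe, ← Multiset.coe_add, Multiset.sort_eq, Multiset.sort_eq, hST]
  rw [hL', List.take_left' (Multiset.length_sort _), Multiset.sort_eq]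

theorem Multiset.card_le_countP_of_le {α : Type*} {p : α → Prop} [DecidablePred p]
    {s u : Multiset α} (h : s ≤ u) (hp : ∀ x ∈ s, p x) : card s ≤ countP p u :=
  (countP_eq_card.2 hp).ge.trans (countP_le_of_le p h)

theorem List.exists_fst_le_le_snd {α : Type*} [LinearOrder α] [Nonempty α] {P : List (α × α)}
    (h : ∀ p ∈ P, ∀ q ∈ P, p.1 ≤ q.2) : ∃ t, ∀ p ∈ P, p.1 ≤ t ∧ t ≤ p.2 := by
  rcases P.toFinset.eq_empty_or_nonempty with hP | hP
  · exact ⟨Classical.arbitrary α, fun p hp => by simp_all⟩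
  · obtain ⟨p₀, hp₀, hmax⟩ := P.toFinset.exists_max_image Prod.fst hP
    refine ⟨p₀.1, fun p hp => ⟨hmax p (List.mem_toFinset.2 hp), h p₀ ?_ p hp⟩⟩
    exact List.mem_toFinset.1 hp₀

theorem insertAsc_eq_orderedInsert (x : ℝ) :
    ∀ l : List ℝ, insertAsc x l = l.orderedInsert (· ≤ ·) x
  | [] => rfl
  | y :: ys => by simp only [insertAsc, List.orderedInsert, insertAsc_eq_orderedInsert x ys]

theorem sortAsc_eq_insertionSort (l : List ℝ) : sortAsc l = l.insertionSort (· ≤ ·) := by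
  induction l with
  | nil => rfl
  | cons a l ih =>
    rw [List.insertionSort_cons, ← ih, ← insertAsc_eq_orderedInsert]
    rfl

theorem sortAsc_perm (l : List ℝ) : (sortAsc l).Perm l := by
  rw [sortAsc_eq_insertionSort]
  exact List.perm_insertionSort _ l

theorem pairwise_sortAsc (l : List ℝ) : (sortAsc l).Pairwise (· ≤ ·) := by
  rw [sortAsc_eq_insertionSort]
  exact List.pairwise_insertionSort _ l

theorem sortDesc_perm (l : List ℝ) : (sortDesc l).Perm l :=
  (List.reverse_perm _).trans (sortAsc_perm l)

theorem pairwise_sortDesc (l : List ℝ) : (sortDesc l).Pairwise (· ≥ ·) :=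
  List.pairwise_reverse.2 (pairwise_sortAsc l)

theorem map_fst_matchPrefix : ∀ as bs : List ℝ,
    (matchPrefix as bs).map Prod.fst = as.take (matchPrefix as bs).length
  | [], _ | _ :: _, [] => by simp [matchPrefix]
  | a :: as, b :: bs => by
    by_cases h : a ≤ b
    · simp [matchPrefix, h, map_fst_matchPrefix as bs]
    · simp [matchPrefix, h]

theorem map_snd_matchPrefix : ∀ as bs : List ℝ,
    (matchPrefix as bs).map Prod.snd = bs.take (matchPrefix as bs).length
  | [], _ | _ :: _, [] => by simp [matchPrefix]
  | a :: as, b :: bs => by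
    by_cases h : a ≤ b
    · simp [matchPrefix, h, map_snd_matchPrefix as bs]
    · simp [matchPrefix, h]

theorem fst_mem_of_mem_matchPrefix {as bs : List ℝ} {p : ℝ × ℝ} (hp : p ∈ matchPrefix as bs) :
    p.1 ∈ as :=
  List.mem_of_mem_take (map_fst_matchPrefix as bs ▸ List.mem_map_of_mem hp)

theorem snd_mem_of_mem_matchPrefix {as bs : List ℝ} {p : ℝ × ℝ} (hp : p ∈ matchPrefix as bs) :
    p.2 ∈ bs :=
  List.mem_of_mem_take (map_snd_matchPrefix as bs ▸ List.mem_map_of_mem hp)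

/-- With `as` ascending and `bs` descending, the `i`-th ask and `j`-th bid of the prefix satisfy
`a_i ≤ a_{max i j} ≤ b_{max i j} ≤ b_j`. -/
theorem fst_le_snd_of_mem_matchPrefix : ∀ {as bs : List ℝ}, as.Pairwise (· ≤ ·) →
    bs.Pairwise (· ≥ ·) → ∀ p ∈ matchPrefix as bs, ∀ q ∈ matchPrefix as bs, p.1 ≤ q.2
  | [], _, _, _ | _ :: _, [], _, _ => by simp [matchPrefix]
  | a :: as, b :: bs, has, hbs => by
    by_cases hab : a ≤ b
    · have ih := fst_le_snd_of_mem_matchPrefix has.of_cons hbs.of_cons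
      simp only [matchPrefix, if_pos hab, List.mem_cons]
      rintro p (rfl | hp) q (rfl | hq)
      · exact hab
      · exact (List.rel_of_pairwise_cons has (fst_mem_of_mem_matchPrefix hq)).trans (ih q hq q hq)
      · exact (ih p hp p hp).trans (List.rel_of_pairwise_cons hbs (snd_mem_of_mem_matchPrefix hp))
      · exact ih p hp q hq
    · simp [matchPrefix, hab]

theorem exists_length_optPairs_le_countP (asks bids : List ℝ) :
    ∃ t : ℝ, (optPairs asks bids).length ≤ Multiset.countP (· ≤ t) (asks : Multiset ℝ) ∧
      (optPairs asks bids).length ≤ Multiset.countP (t ≤ ·) (bids : Multiset ℝ) := by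
  obtain ⟨t, ht⟩ := List.exists_fst_le_le_snd
    (fst_le_snd_of_mem_matchPrefix (pairwise_sortAsc asks) (pairwise_sortDesc bids))
  have hasks : ((optPairs asks bids).map Prod.fst : Multiset ℝ) ≤ asks := by
    rw [optPairs, map_fst_matchPrefix]
    exact Multiset.coe_le.2 ((List.take_sublist _ _).subperm.trans (sortAsc_perm asks).subperm)
  have hbids : ((optPairs asks bids).map Prod.snd : Multiset ℝ) ≤ bids := by
    rw [optPairs, map_snd_matchPrefix]
    exact Multiset.coe_le.2 ((List.take_sublist _ _).subperm.trans (sortDesc_perm bids).subperm)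
  refine ⟨t, ?_, ?_⟩
  · simpa using Multiset.card_le_countP_of_le hasks fun x hx => by
      obtain ⟨p, hp, rfl⟩ := List.mem_map.1 (Multiset.mem_coe.1 hx)
      exact (ht p hp).1
  · simpa using Multiset.card_le_countP_of_le hbids fun x hx => by
      obtain ⟨p, hp, rfl⟩ := List.mem_map.1 (Multiset.mem_coe.1 hx)
      exact (ht p hp).2

theorem extractMin_eq_none_iff {l : List ℝ} : extractMin l = none ↔ l = [] := by
  refine ⟨fun h => ?_, fun h => h ▸ rfl⟩
  cases l with
  | nil => rfl
  | cons a as =>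
    unfold extractMin at h
    split at h
    · simp at h
    · split at h <;> simp at h

theorem extractMin_eq_some : ∀ {l : List ℝ} {a : ℝ} {rest : List ℝ},
    extractMin l = some (a, rest) → (l : Multiset ℝ) = a ::ₘ rest ∧ ∀ y ∈ l, a ≤ y
  | [], _, _, h => by simp [extractMin] at h
  | x :: xs, a, rest, h => by
    unfold extractMin at h
    split at h
    next hxs =>
      obtain ⟨rfl, rfl⟩ := Prod.mk.inj (Option.some_inj.1 h)
      simp [extractMin_eq_none_iff.1 hxs]
    next m r hxs =>
      obtain ⟨hxs_eq, hm⟩ := extractMin_eq_some hxs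
      split at h
      next hxm =>
        obtain ⟨rfl, rfl⟩ := Prod.mk.inj (Option.some_inj.1 h)
        exact ⟨rfl, List.forall_mem_cons.2 ⟨le_rfl, fun y hy => hxm.trans (hm y hy)⟩⟩
      next hxm =>
        obtain ⟨rfl, rfl⟩ := Prod.mk.inj (Option.some_inj.1 h)
        refine ⟨?_, List.forall_mem_cons.2 ⟨(not_le.1 hxm).le, hm⟩⟩
        rw [← Multiset.cons_coe, hxs_eq, Multiset.cons_swap, Multiset.cons_coe]

theorem bfStep_of_exists_le {s : BfState} {b : ℝ} (h : ∃ a ∈ s.unmatchedAsks, a ≤ b) :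
    ∃ (a : ℝ) (rest : List ℝ), (s.unmatchedAsks : Multiset ℝ) = a ::ₘ rest ∧
      (∀ y ∈ s.unmatchedAsks, a ≤ y) ∧
      bfStep s b = ⟨rest, s.matched ++ [(a, b)], s.unmatchedBids⟩ := by
  obtain ⟨y, hy, hyb⟩ := h
  obtain ⟨⟨a, rest⟩, hmin⟩ := Option.ne_none_iff_exists'.1
    (mt extractMin_eq_none_iff.1 (List.ne_nil_of_mem hy))
  obtain ⟨hperm, hle⟩ := extractMin_eq_some hmin
  refine ⟨a, rest, hperm, hle, ?_⟩
  simp [bfStep, hmin, (hle y hy).trans hyb]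

theorem bfStep_of_forall_lt {s : BfState} {b : ℝ} (h : ∀ a ∈ s.unmatchedAsks, b < a) :
    bfStep s b = ⟨s.unmatchedAsks, s.matched, s.unmatchedBids ++ [b]⟩ := by
  rcases hmin : extractMin s.unmatchedAsks with _ | ⟨a, rest⟩
  · simp [bfStep, hmin]
  · have ha : a ∈ s.unmatchedAsks := by
      rw [← Multiset.mem_coe, (extractMin_eq_some hmin).1]
      exact Multiset.mem_cons_self a _
    simp [bfStep, hmin, h a ha]

namespace BfState

def allAsks (s : BfState) : Multiset ℝ := ↑s.unmatchedAsks + ↑(s.matched.map Prod.fst)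

def MatchedLeUnmatched (s : BfState) : Prop :=
  ∀ x ∈ s.matched.map Prod.fst, ∀ y ∈ s.unmatchedAsks, x ≤ y

end BfState

theorem allAsks_bfStep (s : BfState) (b : ℝ) : (bfStep s b).allAsks = s.allAsks := by
  by_cases h : ∃ a ∈ s.unmatchedAsks, a ≤ b
  · obtain ⟨a, rest, hperm, -, hstep⟩ := bfStep_of_exists_le h
    simp only [BfState.allAsks, hstep, hperm, List.map_append, List.map_singleton,
      ← Multiset.coe_add, ← Multiset.cons_coe, Multiset.coe_nil, Multiset.add_cons,
      Multiset.cons_add, add_zero]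
  · push Not at h
    rw [bfStep_of_forall_lt h]
    rfl

theorem BfState.MatchedLeUnmatched.bfStep {s : BfState} (hs : s.MatchedLeUnmatched) (b : ℝ) :
    (bfStep s b).MatchedLeUnmatched := by
  by_cases h : ∃ a ∈ s.unmatchedAsks, a ≤ b
  · obtain ⟨a, rest, hperm, hmin, hstep⟩ := bfStep_of_exists_le h
    have hrest : ∀ y ∈ rest, y ∈ s.unmatchedAsks := fun y hy => by
      rw [← Multiset.mem_coe, hperm]
      exact Multiset.mem_cons_of_mem hy
    rw [BfState.MatchedLeUnmatched, hstep]
    simp only [List.map_append, List.map_singleton, List.mem_append, List.mem_singleton]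
    rintro x (hx | rfl) y hy
    · exact hs x hx y (hrest y hy)
    · exact hmin y (hrest y hy)
  · push Not at h
    rw [bfStep_of_forall_lt h]
    exact hs

theorem allAsks_bfRun (asks bids : List ℝ) : (bfRun asks bids).allAsks = asks :=
  List.foldl_invariant bfStep (fun s => s.allAsks = asks)
    (fun s b hs => (allAsks_bfStep s b).trans hs) bids _ (by simp [BfState.allAsks])

theorem matchedLeUnmatched_bfRun (asks bids : List ℝ) : (bfRun asks bids).MatchedLeUnmatched :=
  List.foldl_invariant bfStep BfState.MatchedLeUnmatched (fun _ b hs => hs.bfStep b) bids _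
    (by simp [BfState.MatchedLeUnmatched])

theorem length_matched_le_bfStep (s : BfState) (b : ℝ) :
    s.matched.length ≤ (bfStep s b).matched.length := by
  by_cases h : ∃ a ∈ s.unmatchedAsks, a ≤ b
  · obtain ⟨a, rest, -, -, hstep⟩ := bfStep_of_exists_le h
    simp [hstep]
  · push Not at h
    rw [bfStep_of_forall_lt h]

theorem length_matched_bfStep_of_exists_le {s : BfState} {b : ℝ}
    (h : ∃ a ∈ s.unmatchedAsks, a ≤ b) :
    (bfStep s b).matched.length = s.matched.length + 1 := by
  obtain ⟨a, rest, -, -, hstep⟩ := bfStep_of_exists_le h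
  simp [hstep]

theorem length_matched_add_countP_le_bfStep (t : ℝ) (s : BfState) (b : ℝ) :
    s.matched.length + Multiset.countP (· ≤ t) (s.unmatchedAsks : Multiset ℝ) ≤
      (bfStep s b).matched.length +
        Multiset.countP (· ≤ t) ((bfStep s b).unmatchedAsks : Multiset ℝ) := by
  by_cases h : ∃ a ∈ s.unmatchedAsks, a ≤ b
  · obtain ⟨a, rest, hperm, -, hstep⟩ := bfStep_of_exists_le h
    rw [hstep, hperm, Multiset.countP_cons]
    simp only [List.length_append, List.length_singleton]
    split <;> omega
  · push Not at h
    rw [bfStep_of_forall_lt h]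

theorem min_le_length_matched_foldl_bfStep (t : ℝ) : ∀ (bids : List ℝ) (s : BfState),
    min (s.matched.length + Multiset.countP (· ≤ t) (s.unmatchedAsks : Multiset ℝ))
        (s.matched.length + Multiset.countP (t ≤ ·) (bids : Multiset ℝ)) ≤
      (bids.foldl bfStep s).matched.length
  | [], s => min_le_right _ _ |>.trans (by simp)
  | b :: bids, s => by
    refine le_trans ?_ (min_le_length_matched_foldl_bfStep t bids (bfStep s b))
    have hsupply := length_matched_add_countP_le_bfStep t s b
    have hlen := length_matched_le_bfStep s b
    rw [← Multiset.cons_coe, Multiset.countP_cons]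
    by_cases htb : t ≤ b
    · by_cases hcheap : ∃ a ∈ s.unmatchedAsks, a ≤ t
      · have := length_matched_bfStep_of_exists_le
          (hcheap.imp fun a ha => ⟨ha.1, ha.2.trans htb⟩)
        simp only [htb, if_true]
        omega
      · have hzero : Multiset.countP (· ≤ t) (s.unmatchedAsks : Multiset ℝ) = 0 :=
          Multiset.countP_eq_zero.2 fun a ha hat => hcheap ⟨a, Multiset.mem_coe.1 ha, hat⟩
        simp only [htb, if_true]
        omega
    · simp only [htb, if_false]
      omega

theorem le_length_matched_bfRun {asks bids : List ℝ} {t : ℝ} {k : ℕ}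
    (hasks : k ≤ Multiset.countP (· ≤ t) (asks : Multiset ℝ))
    (hbids : k ≤ Multiset.countP (t ≤ ·) (bids : Multiset ℝ)) :
    k ≤ (bfRun asks bids).matched.length := by
  have := min_le_length_matched_foldl_bfStep t bids ⟨asks, [], []⟩
  simp only [List.length_nil, zero_add] at this
  exact (le_min hasks hbids).trans this

theorem opt_matched_asks_subset_bf_general (asks bids : List ℝ) :
    (↑((optPairs asks bids).map Prod.fst) : Multiset ℝ) ≤
      ↑((bfRun asks bids).matched.map Prod.fst) := by
  obtain ⟨t, hasks, hbids⟩ := exists_length_optPairs_le_countP asks bids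
  have hk := le_length_matched_bfRun hasks hbids
  have hsplit : ((bfRun asks bids).matched.map Prod.fst : Multiset ℝ) +
      (bfRun asks bids).unmatchedAsks = sortAsc asks := by
    rw [add_comm, ← BfState.allAsks, allAsks_bfRun, Multiset.coe_eq_coe.2 (sortAsc_perm asks)]
  rw [← (pairwise_sortAsc asks).coe_take_card_eq_of_add_eq hsplit
    (matchedLeUnmatched_bfRun asks bids), optPairs, map_fst_matchPrefix]
  exact Multiset.coe_le.2 (List.take_sublist_take_left (by simpa [optPairs] using hk)).subperm

/-- The multiset of ask values matched by the optimal
allocation is contained, as a multiset, in the multiset of ask values matched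
by the Best-first allocation. -/
theorem opt_matched_asks_subset_bf (asks bids : List ℝ)
    (ha : ∀ a ∈ asks, 0 ≤ a) (hb : ∀ b ∈ bids, 0 ≤ b) :
    (↑((optPairs asks bids).map Prod.fst) : Multiset ℝ) ≤
      ↑((bfRun asks bids).matched.map Prod.fst) :=
  opt_matched_asks_subset_bf_general asks bids
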